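/- arXiv:2002.12435 — 5 statements merged into one kernel-verified Lean document; each statement's English description precedes it below -/
import Mathlib

section
/- Let P and P̃ be transition matrices of two finite-state Markov chains on state space S, each having a stationary distribution P^∞ and P̃^∞ respectively, and suppose the matrix (I - P + 𝟙·(P^∞)^T) is invertible. Then P̃^∞ - P^∞ = P̃^∞ (P̃ - P)(I - P + 𝟙·(P^∞)^T)^{-1}, where stationary distributions are viewed as row vectors and 𝟙 is the all-ones column vector. -/
open Matrix BigOperators

/- Multiplying on the right by the fundamental matrix `A = I - P + 𝟙 π` turns `π̃ - π` into
`π̃ (P̃ - P)`: the stationarity equations give `(π̃ - π)(I - P) = π̃ - π̃ P = π̃ (P̃ - P)`, and the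
rank-one part contributes `(∑ π̃ - ∑ π) π = 0`. Inverting `A` gives the identity. -/

section

variable {S R : Type*} [Fintype S] [CommRing R]

theorem vecMul_of_const_rows (x v : S → R) :
    vecMul x (of fun _ j => v j) = (∑ i, x i) • v := by
  funext j
  simp [vecMul, dotProduct, Finset.sum_mul]

theorem vecMul_sub_stationary_fundamental [DecidableEq S] {P Pt : Matrix S S R}
    {π πt : S → R} (hsum : ∑ j, πt j = ∑ j, π j)
    (hπ : vecMul π P = π) (hπt : vecMul πt Pt = πt) :
    vecMul (πt - π) (1 - P + of fun _ j => π j) = vecMul πt (Pt - P) := by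
  rw [vecMul_add, vecMul_of_const_rows, vecMul_sub, vecMul_one, sub_vecMul, hπ, vecMul_sub, hπt]
  simp only [Pi.sub_apply, Finset.sum_sub_distrib, hsum, sub_self, zero_smul, add_zero]
  abel

end

theorem stationary_perturbation_general
    {S : Type*} [Fintype S] [DecidableEq S]
    (P Pt : Matrix S S ℝ)
    (pinf ptinf : S → ℝ)
    (hpinf_sum : ∑ j, pinf j = 1)
    (hptinf_sum : ∑ j, ptinf j = 1)
    (hpinf_stat : Matrix.vecMul pinf P = pinf)
    (hptinf_stat : Matrix.vecMul ptinf Pt = ptinf)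
    (hinv : IsUnit (1 - P + Matrix.of (fun _ j => pinf j) : Matrix S S ℝ).det) :
    ptinf - pinf =
      Matrix.vecMul (Matrix.vecMul ptinf (Pt - P))
        (1 - P + Matrix.of (fun _ j => pinf j) : Matrix S S ℝ)⁻¹ := by
  rw [← vecMul_sub_stationary_fundamental (hptinf_sum.trans hpinf_sum.symm) hpinf_stat
    hptinf_stat, vecMul_vecMul, mul_nonsing_inv _ hinv, vecMul_one]

/-- Perturbation identity for stationary distributions of finite Markov chains
(Schweitzer).  `P` and `Pt` are row-stochastic matrices on the finite state
space `S`, with stationary distributions `pinf` and `ptinf` (row vectors).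
If the fundamental matrix `I - P + 𝟙·(pinf)^T` is invertible, then
`ptinf - pinf = ptinf ⬝ (Pt - P) ⬝ (I - P + 𝟙·(pinf)^T)⁻¹`. -/
theorem stationary_perturbation
    {S : Type*} [Fintype S] [DecidableEq S]
    (P Pt : Matrix S S ℝ)
    (hP_nonneg : ∀ i j, 0 ≤ P i j) (hP_row : ∀ i, ∑ j, P i j = 1)
    (hPt_nonneg : ∀ i j, 0 ≤ Pt i j) (hPt_row : ∀ i, ∑ j, Pt i j = 1)
    (pinf ptinf : S → ℝ)
    (hpinf_nonneg : ∀ j, 0 ≤ pinf j) (hpinf_sum : ∑ j, pinf j = 1)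
    (hptinf_nonneg : ∀ j, 0 ≤ ptinf j) (hptinf_sum : ∑ j, ptinf j = 1)
    (hpinf_stat : Matrix.vecMul pinf P = pinf)
    (hptinf_stat : Matrix.vecMul ptinf Pt = ptinf)
    (hinv : IsUnit (1 - P + Matrix.of (fun _ j => pinf j) : Matrix S S ℝ).det) :
    ptinf - pinf =
      Matrix.vecMul (Matrix.vecMul ptinf (Pt - P))
        (1 - P + Matrix.of (fun _ j => pinf j) : Matrix S S ℝ)⁻¹ :=
  stationary_perturbation_general P Pt pinf ptinf hpinf_sum hptinf_sum hpinf_stat hptinf_stat hinv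
end

section
/- Let P be the transition matrix of a finite-state Markov chain satisfying the Doeblin condition: every entry of P^{t₀} is at least ρ > 0. Let r : S → ℝ be a reward function and let r̄ = Σ_s P^∞(s) r(s) be the stationary average reward. Then the limit of (1/T) Σ_{t=1}^T Σ_x P^t(s,x) r(x) as T → ∞ exists, equals r̄, and is independent of the initial state s. -/
/-!
Doeblin's argument: a row-stochastic matrix does not increase the `ℓ¹` norm of a vector, and
when all entries of `Q = P ^ t₀` are at least `ρ`, it contracts the `ℓ¹` norm of vectors of
total mass zero by the factor `1 - |S| ρ < 1`. Applied to `δ_s - π`, whose image under `P ^ t`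
is `(P ^ t) s - π` by stationarity, this makes every row of `P ^ t` converge geometrically to
`π`; the expected rewards then converge to `π ⬝ᵥ r`, and so do their Cesàro averages.
-/

open Matrix Filter Finset Topology

lemma tendsto_zero_of_antitone_of_le_mul {N : ℕ → ℝ} (hN : Antitone N) (hN0 : ∀ t, 0 ≤ N t)
    {t₀ : ℕ} (ht₀ : 0 < t₀) {c : ℝ} (hc : c < 1) (hcontr : ∀ t, N (t + t₀) ≤ c * N t) :
    Tendsto N atTop (𝓝 0) := by
  set c' := max c 0
  have hblock : ∀ k, N (k * t₀) ≤ c' ^ k * N 0 := by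
    intro k
    induction k with
    | zero => simp
    | succ k ih =>
      calc N ((k + 1) * t₀) = N (k * t₀ + t₀) := by rw [add_one_mul]
        _ ≤ c' * N (k * t₀) :=
          (hcontr _).trans (mul_le_mul_of_nonneg_right (le_max_left c 0) (hN0 _))
        _ ≤ c' * (c' ^ k * N 0) := by gcongr
        _ = c' ^ (k + 1) * N 0 := by ring
  have hbound : ∀ t, N t ≤ c' ^ (t / t₀) * N 0 :=
    fun t => (hN (Nat.div_mul_le_self t t₀)).trans (hblock _)
  have hdiv : Tendsto (fun t => t / t₀) atTop atTop :=
    Nat.tendsto_div_const_atTop ht₀.ne'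
  have hpow : Tendsto (fun t => c' ^ (t / t₀) * N 0) atTop (𝓝 0) := by
    simpa using ((tendsto_pow_atTop_nhds_zero_of_lt_one (le_max_right _ _)
      (max_lt hc one_pos)).comp hdiv).mul_const (N 0)
  exact squeeze_zero hN0 hbound hpow

namespace Matrix

variable {S : Type*} [Fintype S]

lemma sum_abs_vecMul_le_of_sum_row_eq {A : Matrix S S ℝ} {c : ℝ} (hA : ∀ i j, 0 ≤ A i j)
    (hrow : ∀ i, ∑ j, A i j = c) (v : S → ℝ) : ∑ x, |(v ᵥ* A) x| ≤ c * ∑ y, |v y| :=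
  calc ∑ x, |(v ᵥ* A) x| ≤ ∑ x, ∑ y, |v y| * A y x := by
        gcongr with x
        refine (abs_sum_le_sum_abs _ _).trans_eq ?_
        simp only [abs_mul, abs_of_nonneg (hA _ x)]
    _ = c * ∑ y, |v y| := by
        rw [sum_comm, mul_sum]
        simp only [← mul_sum, hrow, mul_comm c]

variable [DecidableEq S]

lemma sum_vecMul_of_mem_rowStochastic {Q : Matrix S S ℝ} (hQ : Q ∈ rowStochastic ℝ S)
    (v : S → ℝ) : ∑ x, (v ᵥ* Q) x = ∑ x, v x := by
  have h : (v ᵥ* Q) ⬝ᵥ 1 = v ⬝ᵥ 1 := by rw [← dotProduct_mulVec, hQ.2]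
  simpa only [dotProduct_one] using h

lemma sum_abs_vecMul_le_of_mem_rowStochastic {Q : Matrix S S ℝ} (hQ : Q ∈ rowStochastic ℝ S)
    (v : S → ℝ) : ∑ x, |(v ᵥ* Q) x| ≤ ∑ y, |v y| := by
  simpa using sum_abs_vecMul_le_of_sum_row_eq (fun _ _ => hQ.1 _ _)
    (sum_row_of_mem_rowStochastic hQ) v

/-- On vectors of total mass zero, subtracting the constant `ρ` from every entry of `Q` does not
change `v ᵥ* Q`, and leaves a nonnegative matrix with row sums `1 - card S * ρ`. -/
lemma sum_abs_vecMul_le_of_le_apply {Q : Matrix S S ℝ} (hQ : Q ∈ rowStochastic ℝ S) {ρ : ℝ}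
    (hρ : ∀ i j, ρ ≤ Q i j) {v : S → ℝ} (hv : ∑ x, v x = 0) :
    ∑ x, |(v ᵥ* Q) x| ≤ (1 - Fintype.card S * ρ) * ∑ y, |v y| := by
  have hshift : v ᵥ* Q = v ᵥ* (Q - of fun _ _ => ρ) := by
    ext x
    simp only [vecMul, dotProduct, sub_apply, of_apply, mul_sub, sum_sub_distrib, ← sum_mul, hv,
      zero_mul, sub_zero]
  rw [hshift]
  refine sum_abs_vecMul_le_of_sum_row_eq (fun i j => sub_nonneg.2 (hρ i j)) (fun i => ?_) v
  simp [sum_sub_distrib, sum_row_of_mem_rowStochastic hQ]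

lemma vecMul_pow_eq_self {P : Matrix S S ℝ} {π : S → ℝ} (hπ : π ᵥ* P = π) (t : ℕ) :
    π ᵥ* P ^ t = π := by
  induction t with
  | zero => simp
  | succ t ih => rw [pow_succ, ← vecMul_vecMul, ih, hπ]

theorem tendsto_vecMul_pow_of_sum_eq_zero [Nonempty S] {P : Matrix S S ℝ}
    (hP : P ∈ rowStochastic ℝ S) {t₀ : ℕ} (ht₀ : 0 < t₀) {ρ : ℝ} (hρ : 0 < ρ)
    (hDoeblin : ∀ i j, ρ ≤ (P ^ t₀) i j) {v : S → ℝ} (hv : ∑ x, v x = 0) :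
    Tendsto (fun t => v ᵥ* P ^ t) atTop (𝓝 0) := by
  set N : ℕ → ℝ := fun t => ∑ x, |(v ᵥ* P ^ t) x|
  have hN0 : ∀ t, 0 ≤ N t := fun t => sum_nonneg fun x _ => abs_nonneg _
  have hanti : Antitone N := antitone_nat_of_succ_le fun t => by
    simpa only [N, pow_succ, ← vecMul_vecMul] using
      sum_abs_vecMul_le_of_mem_rowStochastic hP (v ᵥ* P ^ t)
  have hcontr : ∀ t, N (t + t₀) ≤ (1 - Fintype.card S * ρ) * N t := fun t => by
    have hsum : ∑ x, (v ᵥ* P ^ t) x = 0 := by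
      rw [sum_vecMul_of_mem_rowStochastic (pow_mem hP t), hv]
    simpa only [N, pow_add, ← vecMul_vecMul] using
      sum_abs_vecMul_le_of_le_apply (pow_mem hP t₀) hDoeblin hsum
  have hc : 1 - Fintype.card S * ρ < 1 := by
    have : (0 : ℝ) < Fintype.card S := by exact_mod_cast Fintype.card_pos
    nlinarith
  have hNlim := tendsto_zero_of_antitone_of_le_mul hanti hN0 ht₀ hc hcontr
  refine tendsto_pi_nhds.2 fun x => squeeze_zero_norm (fun t => ?_) hNlim
  exact single_le_sum (f := fun y => |(v ᵥ* P ^ t) y|) (fun y _ => abs_nonneg _) (mem_univ x)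

theorem tendsto_pow_row_of_vecMul_eq_self {P : Matrix S S ℝ}
    (hP : P ∈ rowStochastic ℝ S) {t₀ : ℕ} (ht₀ : 0 < t₀) {ρ : ℝ} (hρ : 0 < ρ)
    (hDoeblin : ∀ i j, ρ ≤ (P ^ t₀) i j) {π : S → ℝ} (hπ_sum : ∑ x, π x = 1)
    (hπ : π ᵥ* P = π) (s : S) : Tendsto (fun t => (P ^ t) s) atTop (𝓝 π) := by
  have : Nonempty S := ⟨s⟩
  set v : S → ℝ := Pi.single s 1 - π
  have hv : ∑ x, v x = 0 := by simp [v, sum_sub_distrib, hπ_sum]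
  have hrow : ∀ t, v ᵥ* P ^ t = (P ^ t) s - π := fun t => by
    rw [sub_vecMul, single_one_vecMul, vecMul_pow_eq_self hπ, row]
  simpa only [hrow, tendsto_sub_nhds_zero_iff] using
    tendsto_vecMul_pow_of_sum_eq_zero hP ht₀ hρ hDoeblin hv

end Matrix

lemma Filter.Tendsto.cesaro_Icc {u : ℕ → ℝ} {l : ℝ} (h : Tendsto u atTop (𝓝 l)) :
    Tendsto (fun T : ℕ => (1 / (T : ℝ)) * ∑ t ∈ Icc 1 T, u t) atTop (𝓝 l) := by
  have hshift : Tendsto (fun t => u (t + 1)) atTop (𝓝 l) := h.comp (tendsto_add_atTop_nat 1)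
  refine hshift.cesaro.congr fun T => ?_
  rw [← Ico_add_one_right_eq_Icc, sum_Ico_eq_sum_range]
  simp [one_div, add_comm]

theorem doeblin_average_reward_limit_general
    {S : Type*} [Fintype S] [DecidableEq S]
    (P : Matrix S S ℝ)
    (hP_nonneg : ∀ i j, 0 ≤ P i j) (hP_row : ∀ i, ∑ j, P i j = 1)
    (t₀ : ℕ) (ρ : ℝ) (hρ : 0 < ρ) (ht₀ : 0 < t₀)
    (hDoeblin : ∀ i j, ρ ≤ (P ^ t₀) i j)
    (pinf : S → ℝ)
    (hpinf_sum : ∑ j, pinf j = 1)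
    (hpinf_stat : Matrix.vecMul pinf P = pinf)
    (r : S → ℝ) :
    ∀ s : S,
      Tendsto
        (fun T : ℕ => (1 / (T : ℝ)) * ∑ t ∈ Finset.Icc 1 T, ∑ x, (P ^ t) s x * r x)
        atTop (nhds (∑ x, pinf x * r x)) := by
  intro s
  have hP : P ∈ rowStochastic ℝ S := mem_rowStochastic_iff_sum.2 ⟨hP_nonneg, hP_row⟩
  have hrow := tendsto_pow_row_of_vecMul_eq_self hP ht₀ hρ hDoeblin hpinf_sum hpinf_stat s
  have hreward : Tendsto (fun t => (P ^ t) s ⬝ᵥ r) atTop (𝓝 (pinf ⬝ᵥ r)) :=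
    ((continuous_id.dotProduct continuous_const).tendsto pinf).comp hrow
  exact hreward.cesaro_Icc

/-- Under the Doeblin condition, the Cesàro averages of expected rewards
`(1/T) ∑_{t=1}^T ∑_x P^t(s,x) r(x)` converge, for every initial state `s`,
to the stationary average reward `r̄ = ∑_s pinf(s) r(s)`; in particular the
limit is independent of the initial state. -/
theorem doeblin_average_reward_limit
    {S : Type*} [Fintype S] [DecidableEq S]
    (P : Matrix S S ℝ)
    (hP_nonneg : ∀ i j, 0 ≤ P i j) (hP_row : ∀ i, ∑ j, P i j = 1)
    (t₀ : ℕ) (ρ : ℝ) (hρ : 0 < ρ) (ht₀ : 0 < t₀)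
    (hDoeblin : ∀ i j, ρ ≤ (P ^ t₀) i j)
    (pinf : S → ℝ)
    (hpinf_nonneg : ∀ j, 0 ≤ pinf j) (hpinf_sum : ∑ j, pinf j = 1)
    (hpinf_stat : Matrix.vecMul pinf P = pinf)
    (r : S → ℝ) :
    ∀ s : S,
      Tendsto
        (fun T : ℕ => (1 / (T : ℝ)) * ∑ t ∈ Finset.Icc 1 T, ∑ x, (P ^ t) s x * r x)
        atTop (nhds (∑ x, pinf x * r x)) :=
  doeblin_average_reward_limit_general P hP_nonneg hP_row t₀ ρ hρ ht₀ hDoeblin pinf hpinf_sum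
    hpinf_stat r
end

section
/- Suppose a learning procedure proceeds in episodes where a new episode begins each time the number of visits to some state-action pair (s,a) doubles (episode k ends at time t when the within-episode count n_k(s_t,a_t) reaches the count N_{τ_k}(s_t,a_t) accumulated before the episode). Then the total number K of episodes in T time steps satisfies K ≤ S·A·log₂(8T/(S·A)), where S = |S| and A = |A|, provided T ≥ S·A. -/
/-! A pair visited `N` times can have triggered at most `1 + log₂ (N + 1)` episodes, since each
of its episodes at least doubles its count. Summing over the `SA` pairs and applying Jensen's
inequality for the concave `log₂` to the numbers `N + 1`, whose total `T + SA` is at most `2T`,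
gives `K ≤ SA · (1 + log₂ (2T / SA)) = SA · log₂ (4T / SA)`. -/

open Finset Real

theorem natCast_le_one_add_logb_succ_of_two_pow_pred_le {k n : ℕ}
    (h : 1 ≤ k → (2 : ℝ) ^ (k - 1) ≤ n) : (k : ℝ) ≤ 1 + logb 2 (n + 1) := by
  rcases k with _ | k
  · have := logb_nonneg (b := 2) one_lt_two (le_add_of_nonneg_left n.cast_nonneg)
    push_cast; linarith
  · have hk : (2 : ℝ) ^ (k : ℝ) ≤ n + 1 := by
      rw [rpow_natCast]; linarith [by simpa using h k.succ_pos]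
    rw [← le_logb_iff_rpow_le one_lt_two (by positivity)] at hk
    push_cast; linarith

section

variable {ι : Type*} [Fintype ι] [Nonempty ι]

theorem sum_log_le_card_mul_log_avg {x : ι → ℝ} (hx : ∀ i, 0 < x i) :
    ∑ i, log (x i) ≤ Fintype.card ι * log ((∑ i, x i) / Fintype.card ι) := by
  have hn : (0 : ℝ) < Fintype.card ι := Nat.cast_pos.2 Fintype.card_pos
  have hjensen := strictConcaveOn_log_Ioi.concaveOn.le_map_sum (t := univ)
    (w := fun _ ↦ (Fintype.card ι : ℝ)⁻¹) (p := x) (fun _ _ ↦ by positivity)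
    (by simp [hn.ne']) (fun i _ ↦ hx i)
  simp only [smul_eq_mul, ← mul_sum] at hjensen
  rw [inv_mul_eq_div, div_le_iff₀ hn, inv_mul_eq_div] at hjensen
  linarith

theorem sum_logb_le_card_mul_logb_avg {b : ℝ} (hb : 1 ≤ b) {x : ι → ℝ} (hx : ∀ i, 0 < x i) :
    ∑ i, logb b (x i) ≤ Fintype.card ι * logb b ((∑ i, x i) / Fintype.card ι) := by
  simp only [logb, ← sum_div, ← mul_div_assoc]
  exact div_le_div_of_nonneg_right (sum_log_le_card_mul_log_avg hx) (log_nonneg hb)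

theorem sum_le_card_mul_logb_of_two_pow_pred_le {K N : ι → ℕ}
    (hdouble : ∀ i, 1 ≤ K i → (2 : ℝ) ^ (K i - 1) ≤ N i) (hcard : Fintype.card ι ≤ ∑ i, N i) :
    ∑ i, (K i : ℝ) ≤ Fintype.card ι * logb 2 (4 * (∑ i, (N i : ℝ)) / Fintype.card ι) := by
  set n : ℝ := (Fintype.card ι : ℝ)
  set T : ℝ := ∑ i, (N i : ℝ)
  have hn : 0 < n := Nat.cast_pos.2 Fintype.card_pos
  have hnT : n ≤ T := by simpa [n, T] using (Nat.cast_le (α := ℝ)).2 hcard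
  have hsum : ∑ i, ((N i : ℝ) + 1) = T + n := by simp [sum_add_distrib, T, n]
  calc ∑ i, (K i : ℝ) ≤ ∑ i, (1 + logb 2 (N i + 1)) :=
        sum_le_sum fun i _ ↦ natCast_le_one_add_logb_succ_of_two_pow_pred_le (hdouble i)
    _ ≤ n + n * logb 2 ((T + n) / n) := by
        rw [sum_add_distrib, ← hsum]
        gcongr
        · simp [n]
        · exact sum_logb_le_card_mul_logb_avg one_le_two fun i ↦ by positivity
    _ = n * logb 2 (2 * ((T + n) / n)) := by
        rw [logb_mul two_ne_zero (by positivity), logb_self_eq_one one_lt_two]; ring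
    _ ≤ n * logb 2 (4 * T / n) := by
        gcongr
        · exact one_lt_two
        · rw [mul_div_assoc', div_le_div_iff_of_pos_right hn]; linarith

end

/-- Bound on the number of episodes under the doubling schedule: if `K sa`
counts the episodes triggered by the pair `sa`, each such episode at least
doubles the visit count of `sa` (so `N sa ≥ 2 ^ (K sa − 1)` whenever
`K sa ≥ 1`), total visits sum to `T`, and `T ≥ S·A`, then the total number of
episodes `Ktot = ∑ sa, K sa` satisfies `Ktot ≤ S·A·log₂(8T/(S·A))`. -/
theorem episode_count_bound
    {S A : Type*} [Fintype S] [Fintype A] [Nonempty S] [Nonempty A]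
    (T : ℕ) (K N : S × A → ℕ) (Ktot : ℕ)
    (hKtot : Ktot = ∑ sa : S × A, K sa)
    (hdouble : ∀ sa : S × A, 1 ≤ K sa → (2 : ℝ) ^ (K sa - 1) ≤ (N sa : ℝ))
    (hvisits : ∑ sa : S × A, N sa = T)
    (hT : Fintype.card S * Fintype.card A ≤ T) :
    (Ktot : ℝ) ≤ (Fintype.card S : ℝ) * (Fintype.card A) *
      Real.logb 2 (8 * T / ((Fintype.card S : ℝ) * (Fintype.card A))) := by
  have hbound := sum_le_card_mul_logb_of_two_pow_pred_le hdouble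
    (hvisits ▸ Fintype.card_prod S A ▸ hT)
  have hvisits' : ∑ sa, (N sa : ℝ) = T := by exact_mod_cast hvisits
  rw [Fintype.card_prod, Nat.cast_mul, hvisits'] at hbound
  have hTpos : 0 < T := lt_of_lt_of_le (by positivity) hT
  calc (Ktot : ℝ) = ∑ sa, (K sa : ℝ) := by rw [hKtot, Nat.cast_sum]
    _ ≤ _ := hbound
    _ ≤ _ := by gcongr <;> norm_num
end

section
/- Suppose there exists a feasible occupation measure μ_feas for the CMDP LP with Σ μ_feas(s,a) c_i(s,a) ≤ c_i^{ub} − ε − η for all i, for some η > 0 and ε > 0. Let λ* ≥ 0 be an optimal Lagrange multiplier for the LP with budgets ĉ where c_i^{ub} − ε ≤ ĉ_i ≤ c_i^{ub}. Then Σ_{i=1}^M λᵢ* ≤ (max_{(s,a)} r(s,a) − min_{(s,a)} r(s,a)) / η. -/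
open BigOperators

/-- A vector `μ` on `S × A` satisfies the flow (stationarity) and simplex
constraints of the occupation-measure LP. -/
def IsFlow {S A : Type*} [Fintype S] [Fintype A]
    (p : S → A → S → ℝ) (μ : S × A → ℝ) : Prop :=
  (∀ sa : S × A, 0 ≤ μ sa) ∧ (∑ sa : S × A, μ sa = 1) ∧
    (∀ s : S, ∑ a : A, μ (s, a) = ∑ sb : S × A, μ sb * p sb.1 sb.2 s)

/-!
Evaluating the `λ*`-Lagrangian at the strictly feasible `μ_feas`, each constraint contributes a
penalty of at least `η λᵢ*`, while at `μ*` complementary slackness kills all penalties. Since `μ*`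
maximizes the Lagrangian, `η ∑ᵢ λᵢ* ≤ ⟨μ*, r⟩ - ⟨μ_feas, r⟩`, and both are averages of `r` under
probability vectors, so the difference is at most `max r - min r`.
-/

open Finset

section WeightedMean

variable {ι : Type*} {s : Finset ι} {w f : ι → ℝ}

theorem Finset.sum_mul_le_sup'_of_sum_eq_one (hs : s.Nonempty) (hw₀ : ∀ i ∈ s, 0 ≤ w i)
    (hw₁ : ∑ i ∈ s, w i = 1) : ∑ i ∈ s, w i * f i ≤ s.sup' hs f := by
  simpa only [centerMass_eq_of_sum_1 _ _ hw₁, smul_eq_mul] using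
    centerMass_le_sup (f := f) hw₀ (hw₁ ▸ one_pos)

theorem Finset.inf'_le_sum_mul_of_sum_eq_one (hs : s.Nonempty) (hw₀ : ∀ i ∈ s, 0 ≤ w i)
    (hw₁ : ∑ i ∈ s, w i = 1) : s.inf' hs f ≤ ∑ i ∈ s, w i * f i := by
  simpa only [centerMass_eq_of_sum_1 _ _ hw₁, smul_eq_mul] using
    inf_le_centerMass (f := f) hw₀ (hw₁ ▸ one_pos)

end WeightedMean

section Lagrangian

variable {X ι : Type*} [Fintype ι]

def lagrangian (f : X → ℝ) (g : ι → X → ℝ) (b lam : ι → ℝ) (x : X) : ℝ :=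
  f x + ∑ i, lam i * (b i - g i x)

theorem sum_mul_le_sub_of_lagrangian_le {f : X → ℝ} {g : ι → X → ℝ} {b lam : ι → ℝ} {η : ℝ}
    {x₀ x : X} (hlam : ∀ i, 0 ≤ lam i) (hslater : ∀ i, g i x₀ ≤ b i - η)
    (hslack : ∑ i, lam i * (b i - g i x) = 0)
    (hle : lagrangian f g b lam x₀ ≤ lagrangian f g b lam x) :
    (∑ i, lam i) * η ≤ f x - f x₀ := by
  have hpenalty : (∑ i, lam i) * η ≤ ∑ i, lam i * (b i - g i x₀) := by
    rw [sum_mul]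
    exact sum_le_sum fun i _ => mul_le_mul_of_nonneg_left (by linarith [hslater i]) (hlam i)
  unfold lagrangian at hle
  linarith

end Lagrangian

theorem lagrange_multiplier_bound_general
    {S A : Type*} [Fintype S] [Fintype A] [Nonempty S] [Nonempty A] (M : ℕ)
    (p : S → A → S → ℝ)
    (r : S → A → ℝ) (c : Fin M → S → A → ℝ) (cub chat : Fin M → ℝ)
    (ε η : ℝ) (hη : 0 < η)
    (hrange : ∀ i, cub i - ε ≤ chat i ∧ chat i ≤ cub i)
    (μfeas : S × A → ℝ) (hfeas_flow : IsFlow p μfeas)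
    (hfeas_slack : ∀ i, ∑ sa : S × A, μfeas sa * c i sa.1 sa.2 ≤ cub i - ε - η)
    (lamstar : Fin M → ℝ) (hlam_nonneg : ∀ i, 0 ≤ lamstar i)
    (μstar : S × A → ℝ) (hμstar_flow : IsFlow p μstar)
    -- zero duality gap / complementary slackness at the optimum:
    (hgap : (∑ sa : S × A, μstar sa * r sa.1 sa.2) =
      (∑ sa : S × A, μstar sa * r sa.1 sa.2) +
        ∑ i, lamstar i * (chat i - ∑ sa : S × A, μstar sa * c i sa.1 sa.2))
    -- the optimal primal maximizes the Lagrangian over the flow polytope: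
    (hmax : ∀ μ : S × A → ℝ, IsFlow p μ →
      (∑ sa : S × A, μ sa * r sa.1 sa.2) +
          ∑ i, lamstar i * (chat i - ∑ sa : S × A, μ sa * c i sa.1 sa.2) ≤
        (∑ sa : S × A, μstar sa * r sa.1 sa.2) +
          ∑ i, lamstar i * (chat i - ∑ sa : S × A, μstar sa * c i sa.1 sa.2)) :
    ∑ i, lamstar i ≤
      ((Finset.univ.sup' Finset.univ_nonempty (fun sa : S × A => r sa.1 sa.2)) -
        (Finset.univ.inf' Finset.univ_nonempty (fun sa : S × A => r sa.1 sa.2))) / η := by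
  have hbound := sum_mul_le_sub_of_lagrangian_le
    (f := fun μ : S × A → ℝ => ∑ sa, μ sa * r sa.1 sa.2)
    (g := fun i μ => ∑ sa, μ sa * c i sa.1 sa.2) (b := chat) (η := η) hlam_nonneg
    (fun i => by linarith [(hrange i).1, hfeas_slack i]) (by linarith [hgap])
    (hmax μfeas hfeas_flow)
  have hμstar_le := sum_mul_le_sup'_of_sum_eq_one (f := fun sa : S × A => r sa.1 sa.2)
    univ_nonempty (fun sa _ => hμstar_flow.1 sa) hμstar_flow.2.1
  have hμfeas_ge := inf'_le_sum_mul_of_sum_eq_one (f := fun sa : S × A => r sa.1 sa.2)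
    univ_nonempty (fun sa _ => hfeas_flow.1 sa) hfeas_flow.2.1
  rw [le_div_iff₀ hη]
  linarith

/-- Bound on optimal Lagrange multipliers in terms of the feasibility slack:
if some occupation measure has all costs at most `c^{ub} − ε − η`, and `λ*` is
an optimal multiplier for the LP with budgets `ĉ ∈ [c^{ub} − ε, c^{ub}]`
(i.e. an optimal primal `μ*` maximizes the `λ*`-Lagrangian over the flow
polytope, with zero duality gap), then
`∑ᵢ λᵢ* ≤ (max r − min r)/η`. -/
theorem lagrange_multiplier_bound
    {S A : Type*} [Fintype S] [Fintype A] [Nonempty S] [Nonempty A] (M : ℕ)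
    (p : S → A → S → ℝ)
    (hp_nonneg : ∀ s a s', 0 ≤ p s a s') (hp_row : ∀ s a, ∑ s', p s a s' = 1)
    (r : S → A → ℝ) (c : Fin M → S → A → ℝ) (cub chat : Fin M → ℝ)
    (ε η : ℝ) (hε : 0 < ε) (hη : 0 < η)
    (hrange : ∀ i, cub i - ε ≤ chat i ∧ chat i ≤ cub i)
    (μfeas : S × A → ℝ) (hfeas_flow : IsFlow p μfeas)
    (hfeas_slack : ∀ i, ∑ sa : S × A, μfeas sa * c i sa.1 sa.2 ≤ cub i - ε - η)
    (lamstar : Fin M → ℝ) (hlam_nonneg : ∀ i, 0 ≤ lamstar i)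
    (μstar : S × A → ℝ) (hμstar_flow : IsFlow p μstar)
    (hμstar_feas : ∀ i, ∑ sa : S × A, μstar sa * c i sa.1 sa.2 ≤ chat i)
    -- zero duality gap / complementary slackness at the optimum:
    (hgap : (∑ sa : S × A, μstar sa * r sa.1 sa.2) =
      (∑ sa : S × A, μstar sa * r sa.1 sa.2) +
        ∑ i, lamstar i * (chat i - ∑ sa : S × A, μstar sa * c i sa.1 sa.2))
    -- the optimal primal maximizes the Lagrangian over the flow polytope:
    (hmax : ∀ μ : S × A → ℝ, IsFlow p μ →
      (∑ sa : S × A, μ sa * r sa.1 sa.2) +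
          ∑ i, lamstar i * (chat i - ∑ sa : S × A, μ sa * c i sa.1 sa.2) ≤
        (∑ sa : S × A, μstar sa * r sa.1 sa.2) +
          ∑ i, lamstar i * (chat i - ∑ sa : S × A, μstar sa * c i sa.1 sa.2)) :
    ∑ i, lamstar i ≤
      ((Finset.univ.sup' Finset.univ_nonempty (fun sa : S × A => r sa.1 sa.2)) -
        (Finset.univ.inf' Finset.univ_nonempty (fun sa : S × A => r sa.1 sa.2))) / η :=
  lagrange_multiplier_bound_general M p r c cub chat ε η hη hrange μfeas hfeas_flow hfeas_slack
    lamstar hlam_nonneg μstar hμstar_flow hgap hmax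
end

section
/- Combining the two sensitivity lemmas: under strict feasibility with slack η > 0 (there is an occupation measure with all costs at most c_i^{ub} − ε − η), for budgets ĉ with c_i^{ub} − ε ≤ ĉ_i ≤ c_i^{ub}, the optimal values satisfy r* − r*(ĉ) ≤ (max_i (c_i^{ub} − ĉ_i)) · η̂ / η, where η̂ = max_{(s,a)} r(s,a) − min_{(s,a)} r(s,a). -/
/-!
Mix an optimal occupation measure `μ` for the budgets `c^{ub}` with the strictly feasible
`μfeas`, giving `μfeas` weight `t = δ / (δ + η)` where `δ = maxᵢ (cᵢ^{ub} − ĉᵢ) ≤ ε`. Costs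
are linear and `μfeas` has slack `ε + η ≥ δ + η`, so the mixture meets the budgets `ĉ`, while
its reward is at least `r* − t · (max r − min r)`.
-/

open BigOperators

theorem ConcaveOn.sub_le_of_slater {E ι : Type*} [AddCommGroup E] [Module ℝ E] {K : Set E}
    {f : E → ℝ} {g : ι → E → ℝ} (hf : ConcaveOn ℝ K f) (hg : ∀ i, ConvexOn ℝ K (g i))
    {b : ι → ℝ} {δ η v : ℝ} (hδ : 0 ≤ δ) (hη : 0 < η)
    {x y : E} (hx : x ∈ K) (hxb : ∀ i, g i x ≤ b i)
    (hy : y ∈ K) (hyb : ∀ i, g i y ≤ b i - δ - η)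
    (hv : ∀ z ∈ K, (∀ i, g i z ≤ b i - δ) → f z ≤ v) :
    f x - v ≤ δ / (δ + η) * (f x - f y) := by
  set t := δ / (δ + η)
  have hδη : 0 < δ + η := by positivity
  have ht₀ : 0 ≤ t := by positivity
  have htδη : t * (δ + η) = δ := div_mul_cancel₀ δ hδη.ne'
  have ht₁ : 0 ≤ 1 - t := by nlinarith
  have hsum : 1 - t + t = 1 := sub_add_cancel 1 t
  set z := (1 - t) • x + t • y
  have hz : z ∈ K := hf.1 hx hy ht₁ ht₀ hsum
  have hzb : ∀ i, g i z ≤ b i - δ := fun i => calc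
    g i z ≤ (1 - t) * g i x + t * g i y := (hg i).2 hx hy ht₁ ht₀ hsum
    _ ≤ (1 - t) * b i + t * (b i - δ - η) := by gcongr; exacts [hxb i, hyb i]
    _ = b i - δ := by linear_combination -htδη
  have hfz : (1 - t) * f x + t * f y ≤ f z := hf.2 hx hy ht₁ ht₀ hsum
  linarith [hv z hz hzb]

theorem concaveOn_sum_mul {ι : Type*} [Fintype ι] (w : ι → ℝ) {K : Set (ι → ℝ)}
    (hK : Convex ℝ K) :
    ConcaveOn ℝ K (fun μ => ∑ i, μ i * w i) :=
  ((dotProductBilin ℝ ℝ).flip w).concaveOn hK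

theorem convexOn_sum_mul {ι : Type*} [Fintype ι] (w : ι → ℝ) {K : Set (ι → ℝ)}
    (hK : Convex ℝ K) :
    ConvexOn ℝ K (fun μ => ∑ i, μ i * w i) :=
  ((dotProductBilin ℝ ℝ).flip w).convexOn hK

theorem convex_setOf_isFlow {S A : Type*} [Fintype S] [Fintype A] (p : S → A → S → ℝ) :
    Convex ℝ {μ | IsFlow p μ} := by
  rintro μ ⟨hμ₀, hμ₁, hμs⟩ ν ⟨hν₀, hν₁, hνs⟩ a b ha hb hab
  refine ⟨fun sa => ?_, ?_, fun s => ?_⟩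
  · simp only [Pi.add_apply, Pi.smul_apply, smul_eq_mul]
    have := hμ₀ sa; have := hν₀ sa; positivity
  · simp [Finset.sum_add_distrib, ← Finset.mul_sum, hμ₁, hν₁, hab]
  · simp [Finset.sum_add_distrib, ← Finset.mul_sum, add_mul, mul_assoc, hμs s, hνs s]

theorem IsFlow.sum_mul_sub_sum_mul_le {S A : Type*} [Fintype S] [Fintype A] [Nonempty S]
    [Nonempty A] {p : S → A → S → ℝ} {μ ν : S × A → ℝ} (hμ : IsFlow p μ) (hν : IsFlow p ν)
    (w : S × A → ℝ) :
    ∑ sa, μ sa * w sa - ∑ sa, ν sa * w sa ≤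
      Finset.univ.sup' Finset.univ_nonempty w - Finset.univ.inf' Finset.univ_nonempty w := by
  have hμ' := Finset.centerMass_le_sup (s := Finset.univ) (f := w) (fun sa _ => hμ.1 sa)
    (by rw [hμ.2.1]; exact one_pos)
  have hν' := Finset.inf_le_centerMass (s := Finset.univ) (f := w) (fun sa _ => hν.1 sa)
    (by rw [hν.2.1]; exact one_pos)
  rw [Finset.centerMass_eq_of_sum_1 _ _ hμ.2.1] at hμ'
  rw [Finset.centerMass_eq_of_sum_1 _ _ hν.2.1] at hν'
  simp only [smul_eq_mul] at hμ' hν'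
  linarith

theorem cmdp_sensitivity_combined_general
    {S A : Type*} [Fintype S] [Fintype A] [Nonempty S] [Nonempty A]
    (M : ℕ) (hM : 0 < M)
    (p : S → A → S → ℝ)
    (r : S → A → ℝ) (c : Fin M → S → A → ℝ) (cub chat : Fin M → ℝ)
    (ε η : ℝ) (hη : 0 < η)
    (hrange : ∀ i, cub i - ε ≤ chat i ∧ chat i ≤ cub i)
    (μfeas : S × A → ℝ) (hfeas_flow : IsFlow p μfeas)
    (hfeas_slack : ∀ i, ∑ sa : S × A, μfeas sa * c i sa.1 sa.2 ≤ cub i - ε - η)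
    (rstar rstarhat : ℝ)
    (hrstar : IsGreatest
      {v : ℝ | ∃ μ : S × A → ℝ, IsFlow p μ ∧
        (∀ i, ∑ sa : S × A, μ sa * c i sa.1 sa.2 ≤ cub i) ∧
        v = ∑ sa : S × A, μ sa * r sa.1 sa.2} rstar)
    (hrstarhat : IsGreatest
      {v : ℝ | ∃ μ : S × A → ℝ, IsFlow p μ ∧
        (∀ i, ∑ sa : S × A, μ sa * c i sa.1 sa.2 ≤ chat i) ∧
        v = ∑ sa : S × A, μ sa * r sa.1 sa.2} rstarhat) :
    rstar - rstarhat ≤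
      (Finset.univ.sup' (Finset.univ_nonempty_iff.2 ⟨⟨0, hM⟩⟩)
          (fun i => cub i - chat i)) *
        (((Finset.univ.sup' Finset.univ_nonempty (fun sa : S × A => r sa.1 sa.2)) -
          (Finset.univ.inf' Finset.univ_nonempty (fun sa : S × A => r sa.1 sa.2))) / η) := by
  obtain ⟨μ, hμ, hμ_cost, rfl⟩ := hrstar.1
  set δ := Finset.univ.sup' (Finset.univ_nonempty_iff.2 ⟨⟨0, hM⟩⟩) (fun i => cub i - chat i)
  set w : S × A → ℝ := fun sa => r sa.1 sa.2
  set spread := Finset.univ.sup' Finset.univ_nonempty w - Finset.univ.inf' Finset.univ_nonempty w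
  have hgap : ∀ i, cub i - chat i ≤ δ := fun i =>
    Finset.le_sup' (fun i => cub i - chat i) (Finset.mem_univ i)
  have hδ : 0 ≤ δ := (sub_nonneg.2 (hrange ⟨0, hM⟩).2).trans (hgap _)
  have hδε : δ ≤ ε := Finset.sup'_le _ _ fun i _ => by linarith [hrange i]
  have hspread : 0 ≤ spread := by
    simpa only [sub_self] using hμ.sum_mul_sub_sum_mul_le hμ w
  have hK := convex_setOf_isFlow p
  have hloss := (concaveOn_sum_mul w hK).sub_le_of_slater (fun i => convexOn_sum_mul _ hK)
    hδ hη hμ hμ_cost hfeas_flow (fun i => (hfeas_slack i).trans (by linarith))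
    fun ν hν hν_cost =>
      hrstarhat.2 ⟨ν, hν, fun i => (hν_cost i).trans (by linarith [hgap i]), rfl⟩
  calc _ ≤ δ / (δ + η) * spread :=
        hloss.trans (by gcongr; exact hμ.sum_mul_sub_sum_mul_le hfeas_flow w)
    _ = δ * spread / (δ + η) := div_mul_eq_mul_div _ _ _
    _ ≤ δ * spread / η := div_le_div_of_nonneg_left (by positivity) hη (by linarith)
    _ = δ * (spread / η) := mul_div_assoc _ _ _

/-- Combined sensitivity bound: under strict feasibility with slack `η > 0`
(some occupation measure has all costs at most `c^{ub} − ε − η`), for budgets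
`ĉ` with `c^{ub} − ε ≤ ĉ ≤ c^{ub}`, the optimal LP values satisfy
`r* − r*(ĉ) ≤ (maxᵢ (cᵢ^{ub} − ĉᵢ)) · η̂ / η` where
`η̂ = max r − min r`. -/
theorem cmdp_sensitivity_combined
    {S A : Type*} [Fintype S] [Fintype A] [Nonempty S] [Nonempty A]
    (M : ℕ) (hM : 0 < M)
    (p : S → A → S → ℝ)
    (hp_nonneg : ∀ s a s', 0 ≤ p s a s') (hp_row : ∀ s a, ∑ s', p s a s' = 1)
    (r : S → A → ℝ) (c : Fin M → S → A → ℝ) (cub chat : Fin M → ℝ)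
    (ε η : ℝ) (hε : 0 < ε) (hη : 0 < η)
    (hrange : ∀ i, cub i - ε ≤ chat i ∧ chat i ≤ cub i)
    (μfeas : S × A → ℝ) (hfeas_flow : IsFlow p μfeas)
    (hfeas_slack : ∀ i, ∑ sa : S × A, μfeas sa * c i sa.1 sa.2 ≤ cub i - ε - η)
    (rstar rstarhat : ℝ)
    (hrstar : IsGreatest
      {v : ℝ | ∃ μ : S × A → ℝ, IsFlow p μ ∧
        (∀ i, ∑ sa : S × A, μ sa * c i sa.1 sa.2 ≤ cub i) ∧
        v = ∑ sa : S × A, μ sa * r sa.1 sa.2} rstar)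
    (hrstarhat : IsGreatest
      {v : ℝ | ∃ μ : S × A → ℝ, IsFlow p μ ∧
        (∀ i, ∑ sa : S × A, μ sa * c i sa.1 sa.2 ≤ chat i) ∧
        v = ∑ sa : S × A, μ sa * r sa.1 sa.2} rstarhat) :
    rstar - rstarhat ≤
      (Finset.univ.sup' (Finset.univ_nonempty_iff.2 ⟨⟨0, hM⟩⟩)
          (fun i => cub i - chat i)) *
        (((Finset.univ.sup' Finset.univ_nonempty (fun sa : S × A => r sa.1 sa.2)) -
          (Finset.univ.inf' Finset.univ_nonempty (fun sa : S × A => r sa.1 sa.2))) / η) :=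
  cmdp_sensitivity_combined_general M hM p r c cub chat ε η hη hrange μfeas hfeas_flow hfeas_slack
    rstar rstarhat hrstar hrstarhat
end
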